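/- arXiv:0809.4849 — 3 statements merged into one kernel-verified Lean document; each statement's English description precedes it below -/
import Mathlib

section
/- Let (X,d) be a complete metric space, S a finite nonempty set, and Γ a group generated by S acting on X by isometries. For g ∈ X define disp(g) = max over γ ∈ S of d(γ·g, g). Suppose P : X → X satisfies: (i) there is a constant 0 < C < 1 with disp(P g) ≤ C · disp(g) for all g ∈ X, and (ii) d(P g, g) ≤ disp(g) for all g ∈ X. Then for every g ∈ X the sequence (Pⁿ g) converges to a limit g∞ ∈ X, and g∞ is fixed by every element of Γ. -/
/-!
Along the orbit `Pⁿ g` the displacement decays geometrically and bounds the step length, so the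
orbit is Cauchy. At its limit every generator has displacement zero, so the limit is fixed by the
generators and hence by all of `Γ`.
-/

open Filter Topology

section IterateControl

variable {X : Type*} {P : X → X} {D : X → ℝ} {C : ℝ}

theorem iterate_control_le_geometric (hC0 : 0 ≤ C) (hcontract : ∀ x, D (P x) ≤ C * D x)
    (x : X) (n : ℕ) : D (P^[n] x) ≤ C ^ n * D x := by
  induction n with
  | zero => simp
  | succ n ih =>
    calc D (P^[n + 1] x) = D (P (P^[n] x)) := by rw [Function.iterate_succ_apply']
      _ ≤ C * D (P^[n] x) := hcontract _
      _ ≤ C * (C ^ n * D x) := mul_le_mul_of_nonneg_left ih hC0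
      _ = C ^ (n + 1) * D x := by ring

theorem tendsto_control_iterate_zero (hC0 : 0 ≤ C) (hC1 : C < 1) (hD : ∀ x, 0 ≤ D x)
    (hcontract : ∀ x, D (P x) ≤ C * D x) (x : X) :
    Tendsto (fun n => D (P^[n] x)) atTop (𝓝 0) := by
  have hgeom : Tendsto (fun n : ℕ => C ^ n * D x) atTop (𝓝 0) := by
    simpa using (tendsto_pow_atTop_nhds_zero_of_lt_one hC0 hC1).mul_const (D x)
  exact squeeze_zero (fun n => hD _) (iterate_control_le_geometric hC0 hcontract x) hgeom

theorem cauchySeq_iterate_of_control [PseudoMetricSpace X] (hC0 : 0 ≤ C) (hC1 : C < 1)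
    (hcontract : ∀ x, D (P x) ≤ C * D x) (hmove : ∀ x, dist (P x) x ≤ D x) (x : X) :
    CauchySeq fun n => P^[n] x := by
  refine cauchySeq_of_le_geometric C (D x) hC1 fun n => ?_
  calc dist (P^[n] x) (P^[n + 1] x) = dist (P (P^[n] x)) (P^[n] x) := by
        rw [Function.iterate_succ_apply', dist_comm]
    _ ≤ D (P^[n] x) := hmove _
    _ ≤ C ^ n * D x := iterate_control_le_geometric hC0 hcontract x n
    _ = D x * C ^ n := mul_comm _ _

end IterateControl

theorem smul_eq_of_tendsto_dist_smul_zero {Γ X ι : Type*} [MetricSpace X] [SMul Γ X]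
    {l : Filter ι} [l.NeBot] {γ : Γ} (hγ : Continuous fun x : X => γ • x) {u : ι → X} {x : X}
    (hu : Tendsto u l (𝓝 x)) (hdisp : Tendsto (fun i => dist (γ • u i) (u i)) l (𝓝 0)) :
    γ • x = x :=
  dist_eq_zero.mp <| tendsto_nhds_unique (((hγ.tendsto x).comp hu).dist hu) hdisp

theorem smul_eq_of_forall_mem_closure_eq_top {Γ X : Type*} [Group Γ] [MulAction Γ X]
    {S : Set Γ} (hS : Subgroup.closure S = ⊤) {x : X} (hx : ∀ γ ∈ S, γ • x = x) (γ : Γ) :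
    γ • x = x :=
  (Subgroup.closure_le (MulAction.stabilizer Γ x)).mpr hx (hS ▸ Subgroup.mem_top γ)

/-- Contraction argument on a complete metric space: if `Γ` is generated by a finite
set `S` and acts by isometries on a complete metric space `X`, `disp g` is the
maximal displacement of `g` by generators, and `P : X → X` satisfies
`disp (P g) ≤ C · disp g` (with `0 < C < 1`) and `dist (P g) g ≤ disp g`, then the
iterates `Pⁿ g` converge and the limit is fixed by every element of `Γ`. -/
theorem stmt_6 {Γ X : Type*} [Group Γ] [MetricSpace X] [CompleteSpace X]
    [MulAction Γ X] (hiso : ∀ γ : Γ, Isometry (fun x : X => γ • x))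
    (S : Finset Γ) (hS : S.Nonempty)
    (hgen : Subgroup.closure (S : Set Γ) = ⊤)
    (P : X → X) (C : ℝ) (hC0 : 0 < C) (hC1 : C < 1)
    (hcontract : ∀ g : X,
      S.sup' hS (fun γ => dist (γ • P g) (P g)) ≤ C * S.sup' hS (fun γ => dist (γ • g) g))
    (hmove : ∀ g : X, dist (P g) g ≤ S.sup' hS (fun γ => dist (γ • g) g)) :
    ∀ g : X, ∃ glim : X,
      Tendsto (fun n : ℕ => P^[n] g) atTop (nhds glim) ∧ ∀ γ : Γ, γ • glim = glim := by
  intro g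
  let disp : X → ℝ := fun x => S.sup' hS fun γ => dist (γ • x) x
  have hdisp_nonneg : ∀ x, 0 ≤ disp x := fun x =>
    dist_nonneg.trans (S.le_sup' (fun γ => dist (γ • x) x) hS.choose_spec)
  have hdisp_tendsto : Tendsto (fun n => disp (P^[n] g)) atTop (𝓝 0) :=
    tendsto_control_iterate_zero hC0.le hC1 hdisp_nonneg hcontract g
  obtain ⟨glim, hglim⟩ :=
    cauchySeq_tendsto_of_complete (cauchySeq_iterate_of_control hC0.le hC1 hcontract hmove g)
  refine ⟨glim, hglim, smul_eq_of_forall_mem_closure_eq_top hgen fun γ hγ => ?_⟩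
  refine smul_eq_of_tendsto_dist_smul_zero (hiso γ).continuous hglim ?_
  exact squeeze_zero (fun _ => dist_nonneg)
    (fun n => S.le_sup' (fun γ => dist (γ • P^[n] g) (P^[n] g)) hγ) hdisp_tendsto
end

section
/- Let n ≥ 1, let a : ℝⁿ → Matₙ(ℝ) be a smooth matrix-valued map, let p ∈ ℝⁿ, and let j ≥ 0. Suppose det(a(x)) vanishes to order at most j at p (i.e., some partial derivative of det(a) of order ≤ j is nonzero at p), and let f : ℝⁿ → ℝⁿ be a smooth map fixing p such that each entry of the matrix a(x) − a(x)·Df(x)ᵀ vanishes to order at least j+1 at p. Then Df(p) is the identity matrix. -/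
/-- `g` vanishes to order at least `m` at `p`: all iterated derivatives of order
`< m` vanish at `p`. -/
def VanishesToOrderAtLeast {n : ℕ} (g : (Fin n → ℝ) → ℝ) (p : Fin n → ℝ) (m : ℕ) : Prop :=
  ∀ k < m, iteratedFDeriv ℝ k g p = 0

/-- Determinant of a smooth matrix-valued map is smooth. -/
lemma aux_contDiff_det {n : ℕ} {A : (Fin n → ℝ) → Matrix (Fin n) (Fin n) ℝ}
    (hA : ∀ k l : Fin n, ContDiff ℝ (⊤ : ℕ∞) fun x => A x k l) :
    ContDiff ℝ (⊤ : ℕ∞) fun x => (A x).det := by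
  have : (fun x => (A x).det) =
      fun x => ∑ σ : Equiv.Perm (Fin n), (Equiv.Perm.sign σ : ℝ) * ∏ i, A x (σ i) i := by
    funext x
    rw [Matrix.det_apply]
    congr 1
    funext σ
    simp [Units.smul_def, zsmul_eq_mul]
  rw [this]
  apply ContDiff.sum
  intro σ _
  apply ContDiff.mul contDiff_const
  exact contDiff_prod fun i _ => hA _ _

/-- A smooth multiple of a function vanishing to order `≥ m` vanishes to order `≥ m`. -/
lemma aux_vanish_mul {n : ℕ} {u v : (Fin n → ℝ) → ℝ} {p : Fin n → ℝ} {m : ℕ}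
    (hu : ContDiff ℝ (⊤ : ℕ∞) u) (hv : ContDiff ℝ (⊤ : ℕ∞) v)
    (h : VanishesToOrderAtLeast v p m) :
    VanishesToOrderAtLeast (fun x => u x * v x) p m := by
  intro k hk
  have hb := norm_iteratedFDeriv_mul_le (𝕜 := ℝ) (hu.of_le (by exact_mod_cast le_top)) (hv.of_le (by exact_mod_cast le_top)) p
    (le_refl (k : WithTop ℕ∞))
  have hzero : ∑ i ∈ Finset.range (k + 1),
      (k.choose i : ℝ) * ‖iteratedFDeriv ℝ i u p‖ * ‖iteratedFDeriv ℝ (k - i) v p‖ = 0 := by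
    apply Finset.sum_eq_zero
    intro i hi
    have : iteratedFDeriv ℝ (k - i) v p = 0 := h _ (lt_of_le_of_lt (Nat.sub_le k i) hk)
    rw [this]
    simp
  rw [hzero] at hb
  exact norm_le_zero_iff.mp hb

/-- The key pointwise Leibniz consequence: if `g` vanishes to order exactly `k` at `p`
(the `k`-th derivative is the first nonzero one) and `g * h` has vanishing `k`-th
derivative at `p`, with `g, h` smooth, then `h p = 0`. -/
lemma aux_key {n : ℕ} {g h : (Fin n → ℝ) → ℝ} {p : Fin n → ℝ} {k : ℕ}
    (hg : ContDiff ℝ (⊤ : ℕ∞) g) (hh : ContDiff ℝ (⊤ : ℕ∞) h)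
    (hlow : ∀ i < k, iteratedFDeriv ℝ i g p = 0)
    (hk : iteratedFDeriv ℝ k g p ≠ 0)
    (hprod : iteratedFDeriv ℝ k (fun x => g x * h x) p = 0) :
    h p = 0 := by
  have hdecomp : (fun x => g x * h x)
      = (h p • g) + fun x => g x * (h x - h p) := by
    funext x
    simp only [Pi.add_apply, Pi.smul_apply, smul_eq_mul]
    ring
  have hg' : ContDiff ℝ (k : WithTop ℕ∞) (h p • g) := by
    have := ContDiff.const_smul (h p) (hg.of_le (by exact_mod_cast le_top : ((k:WithTop ℕ∞)) ≤ ((⊤ : ℕ∞) : WithTop ℕ∞)))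
    exact this
  have hmul : ContDiff ℝ (⊤ : ℕ∞) fun x => g x * (h x - h p) := hg.mul (hh.sub contDiff_const)
  have hsecond : iteratedFDeriv ℝ k (fun x => g x * (h x - h p)) p = 0 := by
    have hh' : ContDiff ℝ (⊤ : ℕ∞) fun x => h x - h p := hh.sub contDiff_const
    have hb := norm_iteratedFDeriv_mul_le (𝕜 := ℝ) (f := g) (g := fun x => h x - h p)
      (hg.of_le (by exact_mod_cast le_top)) (hh'.of_le (by exact_mod_cast le_top)) p (le_refl (k : WithTop ℕ∞))
    have hzero : ∑ i ∈ Finset.range (k + 1), (k.choose i : ℝ) * ‖iteratedFDeriv ℝ i g p‖ *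
        ‖iteratedFDeriv ℝ (k - i) (fun x => h x - h p) p‖ = 0 := by
      apply Finset.sum_eq_zero
      intro i hi
      rcases lt_or_ge i k with hik | hik
      · rw [hlow i hik]; simp
      · have hik' : i = k := le_antisymm (Nat.lt_succ_iff.mp (Finset.mem_range.mp hi)) hik
        subst hik'
        have hii : i - i = 0 := Nat.sub_self i
        have : iteratedFDeriv ℝ (i - i) (fun x => h x - h p) p = 0 := by
          rw [hii]
          ext v
          simp [iteratedFDeriv_zero_apply]
        rw [this]
        simp
    rw [hzero] at hb
    exact norm_le_zero_iff.mp hb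
  have := iteratedFDeriv_add_apply (𝕜 := ℝ) (x := p) hg'.contDiffAt (hmul.of_le (by exact_mod_cast le_top)).contDiffAt
  rw [← hdecomp, hprod, hsecond, add_zero] at this
  rw [iteratedFDeriv_const_smul_apply (hg.of_le (by exact_mod_cast le_top)).contDiffAt] at this
  have hp0 : h p • iteratedFDeriv ℝ k g p = 0 := this.symm
  rcases smul_eq_zero.mp hp0 with h0 | h0
  · exact h0
  · exact absurd h0 hk

/-- Vanishing to order `≥ m` is stable under finite sums of smooth functions. -/
lemma aux_vanish_sum {n : ℕ} {ι : Type*} (s : Finset ι)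
    {F : ι → (Fin n → ℝ) → ℝ} {p : Fin n → ℝ} {m : ℕ}
    (hsm : ∀ i ∈ s, ContDiff ℝ (⊤ : ℕ∞) (F i))
    (h : ∀ i ∈ s, VanishesToOrderAtLeast (F i) p m) :
    VanishesToOrderAtLeast (fun x => ∑ i ∈ s, F i x) p m := by
  intro k hk
  have := iteratedFDeriv_sum (𝕜 := ℝ) (f := F) (u := s) (i := k)
    (fun i hi => (hsm i hi).of_le (by exact_mod_cast le_top))
  have h2 : iteratedFDeriv ℝ k (fun x => ∑ i ∈ s, F i x) p
      = ∑ i ∈ s, iteratedFDeriv ℝ k (F i) p := by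
    have h3 := congrFun this p
    simpa [Finset.sum_apply] using h3
  rw [h2]
  exact Finset.sum_eq_zero fun i hi => h i hi k hk

/-- The almost-rigidity computation: if `a : ℝⁿ → Matₙ(ℝ)` is smooth, `det (a x)`
vanishes to order at most `j` at `p`, and `f` is a smooth map fixing `p` such that
every entry of `a(x) − a(x)·Df(x)ᵀ` vanishes to order at least `j + 1` at `p`,
then `Df(p)` is the identity. -/
theorem stmt_13 (n : ℕ) (hn : 1 ≤ n)
    (a : (Fin n → ℝ) → Matrix (Fin n) (Fin n) ℝ)
    (ha : ∀ k l : Fin n, ContDiff ℝ (⊤ : ℕ∞) fun x => a x k l)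
    (p : Fin n → ℝ) (j : ℕ)
    (hdet : ∃ k ≤ j, iteratedFDeriv ℝ k (fun x => (a x).det) p ≠ 0)
    (f : (Fin n → ℝ) → Fin n → ℝ) (hf : ContDiff ℝ (⊤ : ℕ∞) f) (hfp : f p = p)
    (hvan : ∀ k l : Fin n, VanishesToOrderAtLeast
      (fun x => a x k l - ∑ m : Fin n, a x k m * fderiv ℝ f x (Pi.single m 1) l)
      p (j + 1)) :
    fderiv ℝ f p = ContinuousLinearMap.id ℝ (Fin n → ℝ) := by
  classical
  -- smoothness of the entries of the Jacobian
  have hM : ∀ m l : Fin n, ContDiff ℝ (⊤ : ℕ∞) fun x => fderiv ℝ f x (Pi.single m 1) l := by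
    intro m l
    have h1 : ContDiff ℝ (⊤ : ℕ∞) (fderiv ℝ f) := hf.fderiv_right (by simp)
    have h2 : ContDiff ℝ (⊤ : ℕ∞) fun x => fderiv ℝ f x (Pi.single m 1) :=
      h1.clm_apply contDiff_const
    exact (ContinuousLinearMap.proj (R := ℝ) (φ := fun _ : Fin n => ℝ) l).contDiff.comp h2
  -- smoothness of the determinant and of the adjugate entries
  have hg : ContDiff ℝ (⊤ : ℕ∞) fun x => (a x).det := aux_contDiff_det ha
  have hadj : ∀ m k : Fin n, ContDiff ℝ (⊤ : ℕ∞) fun x => (a x).adjugate m k := by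
    intro m k
    have heq : (fun x => (a x).adjugate m k)
        = fun x => ((a x).updateRow k (Pi.single m 1)).det := by
      funext x
      rw [Matrix.adjugate_apply]
    rw [heq]
    apply aux_contDiff_det
    intro i l
    have heq2 : (fun x => (a x).updateRow k (Pi.single m 1) i l)
        = fun x => if i = k then (Pi.single m 1 : Fin n → ℝ) l else a x i l := by
      funext x
      rw [Matrix.updateRow_apply]
    rw [heq2]
    by_cases hik : i = k
    · simp only [hik, if_pos rfl]
      exact contDiff_const
    · simp only [if_neg hik]
      exact ha i l
  -- the key algebraic identity: det · (Id − Df) = adjugate · (a − a·Dfᵀ)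
  have hkey : ∀ m l : Fin n, (fun x => (a x).det *
      ((if m = l then (1:ℝ) else 0) - fderiv ℝ f x (Pi.single m 1) l))
      = fun x => ∑ k, (a x).adjugate m k *
          (a x k l - ∑ t, a x k t * fderiv ℝ f x (Pi.single t 1) l) := by
    intro m l
    funext x
    have hADJ : ∀ t : Fin n, ∑ k, (a x).adjugate m k * a x k t
        = (a x).det * (if m = t then 1 else 0) := by
      intro t
      have h := congrArg (fun B : Matrix (Fin n) (Fin n) ℝ => B m t)
        (Matrix.adjugate_mul (a x))
      simpa [Matrix.mul_apply, Matrix.one_apply, smul_eq_mul] using h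
    have step1 : ∑ t, ((a x).det * (if m = t then (1:ℝ) else 0)) *
        fderiv ℝ f x (Pi.single t 1) l
        = (a x).det * fderiv ℝ f x (Pi.single m 1) l := by
      simp only [mul_ite, mul_one, mul_zero, ite_mul, zero_mul]
      rw [Finset.sum_ite_eq]
      simp
    calc (a x).det * ((if m = l then (1:ℝ) else 0) - fderiv ℝ f x (Pi.single m 1) l)
        = (∑ k, (a x).adjugate m k * a x k l)
          - ∑ t, (∑ k, (a x).adjugate m k * a x k t) *
              fderiv ℝ f x (Pi.single t 1) l := by
          simp only [hADJ]
          rw [mul_sub, step1]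
      _ = ∑ k, (a x).adjugate m k *
            (a x k l - ∑ t, a x k t * fderiv ℝ f x (Pi.single t 1) l) := by
          simp only [mul_sub, Finset.sum_sub_distrib, Finset.mul_sum, Finset.sum_mul,
            mul_assoc]
          congr 1
          rw [Finset.sum_comm]
  -- det · (Id − Df) vanishes to order ≥ j + 1
  have hFvan : ∀ m l : Fin n, VanishesToOrderAtLeast
      (fun x => (a x).det * ((if m = l then (1:ℝ) else 0) - fderiv ℝ f x (Pi.single m 1) l))
      p (j + 1) := by
    intro m l
    rw [hkey m l]
    apply aux_vanish_sum
    · intro k _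
      exact (hadj m k).mul ((ha k l).sub (ContDiff.sum fun t _ => (ha k t).mul (hM t l)))
    · intro k _
      exact aux_vanish_mul (hadj m k)
        ((ha k l).sub (ContDiff.sum fun t _ => (ha k t).mul (hM t l))) (hvan k l)
  -- minimal vanishing order of the determinant
  obtain ⟨k₁, hk₁j, hk₁⟩ := hdet
  have hex : ∃ k, iteratedFDeriv ℝ k (fun x => (a x).det) p ≠ 0 := ⟨k₁, hk₁⟩
  set k₀ := Nat.find hex with hk₀def
  have hk₀ne : iteratedFDeriv ℝ k₀ (fun x => (a x).det) p ≠ 0 := Nat.find_spec hex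
  have hk₀le : k₀ ≤ j := le_trans (Nat.find_min' hex hk₁) hk₁j
  have hlow : ∀ i < k₀, iteratedFDeriv ℝ i (fun x => (a x).det) p = 0 := by
    intro i hi
    by_contra hne
    exact absurd hi (not_lt_of_ge (Nat.find_min' hex hne))
  -- conclude each entry of Id − Df vanishes at p
  have h_entry : ∀ m l : Fin n,
      (if m = l then (1:ℝ) else 0) - fderiv ℝ f p (Pi.single m 1) l = 0 := by
    intro m l
    exact aux_key hg (contDiff_const.sub (hM m l)) hlow hk₀ne
      (hFvan m l k₀ (lt_of_le_of_lt hk₀le (Nat.lt_succ_self j)))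
  have h_entry' : ∀ m l : Fin n,
      fderiv ℝ f p (Pi.single m 1) l = if m = l then (1:ℝ) else 0 := by
    intro m l
    have := h_entry m l
    linarith [this]
  -- conclude Df(p) = Id
  apply ContinuousLinearMap.ext
  intro v
  have hv : v = ∑ m, (Pi.single m (v m) : Fin n → ℝ) := (Finset.univ_sum_single v).symm
  have hsingle : ∀ m : Fin n, (Pi.single m (v m) : Fin n → ℝ) = v m • (Pi.single m 1 : Fin n → ℝ) := by
    intro m
    ext t
    by_cases h : t = m <;> simp [Pi.single_apply, h]
  conv_lhs => rw [hv]
  rw [map_sum]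
  funext l
  rw [Finset.sum_apply]
  have hterm : ∀ m : Fin n, (fderiv ℝ f p (Pi.single m (v m))) l
      = v m * (if m = l then (1:ℝ) else 0) := by
    intro m
    rw [hsingle m, map_smul]
    simp [h_entry' m l]
  simp only [hterm]
  simp only [mul_ite, mul_one, mul_zero]
  rw [Finset.sum_ite_eq']
  simp
end

section
/- Every finitely generated linear group of bounded exponent is finite; that is, if Γ is a finitely generated subgroup of GL(n, ℂ) and there exists m ≥ 1 with γ^m = 1 for all γ ∈ Γ, then Γ is finite. -/
open Polynomial Matrix

namespace Burnside1905

variable {n m : ℕ}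

lemma list_sum_fin (l : List ℂ) (hlen : l.length = n) :
    ∑ i : Fin n, l.get (Fin.cast hlen.symm i) = l.sum := by
  have h1 : l.sum = ∑ i : Fin l.length, l.get i := by
    conv_lhs => rw [← List.ofFn_get l]
    rw [List.sum_ofFn]
  rw [h1]
  exact Fintype.sum_equiv (finCongr hlen.symm) _ _ (fun i => by simp [finCongr])

/-- Evaluation of the characteristic polynomial. -/
lemma eval_charpoly (M : Matrix (Fin n) (Fin n) ℂ) (μ : ℂ) :
    M.charpoly.eval μ = (Matrix.diagonal (fun _ => μ) - M).det := by
  rw [Matrix.charpoly, ← Polynomial.coe_evalRingHom, RingHom.map_det]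
  congr 1
  ext i j
  by_cases h : i = j
  · subst h
    simp [Matrix.charmatrix_apply_eq]
  · simp [Matrix.charmatrix_apply_ne _ _ _ h, Matrix.diagonal_apply_ne _ h]

/-- Every root of the characteristic polynomial of a matrix with `M ^ m = 1`
is an `m`-th root of unity. -/
lemma root_pow_eq_one {M : Matrix (Fin n) (Fin n) ℂ} (hM : M ^ m = 1)
    {μ : ℂ} (hμ : μ ∈ M.charpoly.roots) : μ ^ m = 1 := by
  have hroot : M.charpoly.eval μ = 0 := (Polynomial.mem_roots'.1 hμ).2
  rw [eval_charpoly] at hroot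
  obtain ⟨v, hv, hveq⟩ := (Matrix.exists_mulVec_eq_zero_iff).2 hroot
  have hMv : M.mulVec v = μ • v := by
    rw [Matrix.sub_mulVec] at hveq
    have h2 : (Matrix.diagonal (fun _ => μ)).mulVec v = μ • v := by
      ext i; simp [Matrix.mulVec_diagonal, mul_comm]
    rw [h2, sub_eq_zero] at hveq
    exact hveq.symm
  have key : ∀ k : ℕ, (M ^ k).mulVec v = μ ^ k • v := by
    intro k
    induction k with
    | zero => simp
    | succ k ih =>
      rw [pow_succ, ← Matrix.mulVec_mulVec, hMv, Matrix.mulVec_smul, ih, smul_smul,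
        pow_succ]
      ring_nf
  have h1 : (μ ^ m) • v = v := by
    rw [← key, hM, Matrix.one_mulVec]
  obtain ⟨i, hi⟩ := Function.ne_iff.1 hv
  have h2 : (μ ^ m) * v i = 1 * v i := by
    rw [one_mul]
    exact congrFun (congrArg (fun w => (w : Fin n → ℂ)) h1) i
  exact mul_right_cancel₀ hi h2

/-- The multiset of roots of the charpoly of an `n × n` complex matrix has card `n`. -/
lemma card_roots_charpoly (M : Matrix (Fin n) (Fin n) ℂ) :
    M.charpoly.roots.card = n := by
  have hs : M.charpoly.Splits := IsAlgClosed.splits M.charpoly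
  rw [(Polynomial.splits_iff_card_roots).1 hs, Matrix.charpoly_natDegree_eq_dim,
    Fintype.card_fin]

/-- The set of possible traces: sums of `n` many `m`-th roots of unity. -/
def rootSums (n m : ℕ) : Set ℂ :=
  (fun f : Fin n → ℂ => ∑ i, f i) '' (Set.univ.pi fun _ : Fin n => {z : ℂ | z ^ m = 1})

lemma rootSums_finite (hm : 1 ≤ m) : (rootSums n m).Finite := by
  apply Set.Finite.image
  apply Set.Finite.pi
  intro _
  have h : {z : ℂ | z ^ m = 1} ⊆ {z : ℂ | ((X : ℂ[X]) ^ m - C 1).IsRoot z} := by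
    intro z hz
    simp only [Set.mem_setOf_eq, Polynomial.IsRoot, eval_sub, eval_pow, eval_X, eval_C,
      sub_eq_zero]
    exact hz
  exact (Polynomial.finite_setOf_isRoot
    (Polynomial.X_pow_sub_C_ne_zero (by omega) 1)).subset h

/-- The trace of a matrix of finite order dividing `m` lies in `rootSums n m`. -/
lemma trace_mem_rootSums {M : Matrix (Fin n) (Fin n) ℂ} (hM : M ^ m = 1) :
    M.trace ∈ rootSums n m := by
  have htr : M.trace = M.charpoly.roots.sum := Matrix.trace_eq_sum_roots_charpoly M
  set l : List ℂ := M.charpoly.roots.toList with hl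
  have hlen : l.length = n := by
    rw [hl, Multiset.length_toList, card_roots_charpoly]
  have hmem : ∀ x ∈ l, x ^ m = 1 := by
    intro x hx
    exact root_pow_eq_one hM (by rwa [← Multiset.mem_toList])
  have hsum : M.trace = l.sum := by
    rw [htr, ← Multiset.sum_toList]
  refine ⟨fun i => l.get (Fin.cast hlen.symm i), ?_, ?_⟩
  · intro i _
    exact hmem _ (l.get_mem _)
  · simp only []
    rw [list_sum_fin l hlen, hsum]

/-- A nilpotent matrix `N` with `(1 + N) ^ m = 1` is zero. -/
lemma nilpotent_part_zero {N : Matrix (Fin n) (Fin n) ℂ} (hm : 1 ≤ m)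
    (hNm : (1 + N) ^ m = 1) {K : ℕ} (hK : N ^ K = 0) : N = 0 := by
  have step : ∀ k : ℕ, 1 ≤ k → N ^ (k + 1) = 0 → N ^ k = 0 := by
    intro k hk hNk
    have hcomm : Commute N (1 : Matrix (Fin n) (Fin n) ℂ) := Commute.one_right N
    have hexp : (N + 1) ^ m = ∑ j ∈ Finset.range (m + 1),
        N ^ j * 1 ^ (m - j) * (m.choose j : Matrix (Fin n) (Fin n) ℂ) :=
      hcomm.add_pow m
    simp only [one_pow, mul_one] at hexp
    rw [add_comm 1 N] at hNm
    rw [hNm] at hexp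
    rw [Finset.sum_range_succ'] at hexp
    simp only [pow_zero, Nat.choose_zero_right, Nat.cast_one, one_mul] at hexp
    have h'' : (∑ i ∈ Finset.range m,
        N ^ (i + 1) * (m.choose (i + 1) : Matrix (Fin n) (Fin n) ℂ)) = 0 := by
      have h3 := congrArg (fun A => A - 1) hexp
      simpa using h3.symm
    have hmul := congrArg (fun A => A * N ^ (k - 1)) h''
    simp only [Finset.sum_mul, zero_mul] at hmul
    have hre : ∀ i : ℕ, N ^ (i + 1) * (m.choose (i + 1) : Matrix (Fin n) (Fin n) ℂ) * N ^ (k - 1)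
        = N ^ (i + 1 + (k - 1)) * (m.choose (i + 1) : Matrix (Fin n) (Fin n) ℂ) := by
      intro i
      rw [mul_assoc, (Nat.cast_commute (m.choose (i + 1)) (N ^ (k - 1))).eq, ← mul_assoc,
        ← pow_add]
    have hterm : ∀ i ∈ Finset.range m, i ≠ 0 →
        N ^ (i + 1) * (m.choose (i + 1) : Matrix (Fin n) (Fin n) ℂ) * N ^ (k - 1) = 0 := by
      intro i _ hi
      rw [hre i]
      have hik : i + 1 + (k - 1) = (k + 1) + (i - 1) := by omega
      rw [hik, pow_add, hNk, zero_mul, zero_mul]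
    rw [Finset.sum_eq_single_of_mem 0 (Finset.mem_range.2 (by omega)) hterm] at hmul
    rw [hre 0] at hmul
    have hk0 : 0 + 1 + (k - 1) = k := by omega
    rw [hk0, Nat.choose_one_right] at hmul
    have hsm : N ^ k * (m : Matrix (Fin n) (Fin n) ℂ) = (m : ℂ) • N ^ k := by
      rw [(Nat.cast_commute m (N ^ k)).eq.symm, ← nsmul_eq_mul, ← Nat.cast_smul_eq_nsmul ℂ]
    rw [hsm] at hmul
    have hm0 : (m : ℂ) ≠ 0 := Nat.cast_ne_zero.2 (by omega)
    exact (smul_eq_zero.1 hmul).resolve_left hm0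
  have desc : ∀ k : ℕ, N ^ (k + 1) = 0 → N = 0 := by
    intro k
    induction k with
    | zero => intro h; rwa [pow_one] at h
    | succ k ih =>
      intro h
      exact ih (step (k + 1) (by omega) h)
  have hK' : N ^ (K + 1) = 0 := by rw [pow_succ, hK, zero_mul]
  exact desc K hK'

/-- Key lemma: a matrix of finite order dividing `m` with trace `n` is the identity. -/
lemma eq_one_of_trace_eq {M : Matrix (Fin n) (Fin n) ℂ} (hm : 1 ≤ m)
    (hM : M ^ m = 1) (htr : M.trace = n) : M = 1 := by
  have hs : M.charpoly.Splits := IsAlgClosed.splits M.charpoly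
  have hcard := card_roots_charpoly M
  set l : List ℂ := M.charpoly.roots.toList with hl
  have hlen : l.length = n := by rw [hl, Multiset.length_toList, hcard]
  have hmem : ∀ x ∈ l, x ^ m = 1 := fun x hx =>
    root_pow_eq_one hM (by rwa [← Multiset.mem_toList])
  set f : Fin n → ℂ := fun i => l.get (Fin.cast hlen.symm i) with hf
  have hfl : ∀ i, f i ∈ l := fun i => l.get_mem _
  have hfsum : ∑ i, f i = (n : ℂ) := by
    have h2 : M.trace = l.sum := by
      rw [Matrix.trace_eq_sum_roots_charpoly M, ← Multiset.sum_toList]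
    rw [hf, list_sum_fin l hlen, ← h2, htr]
  have habs : ∀ i, ‖f i‖ = 1 := by
    intro i
    have h1 : (‖f i‖) ^ m = 1 := by
      rw [← norm_pow, hmem _ (hfl i)]
      simp
    have h2 : (0 : ℝ) ≤ ‖f i‖ := norm_nonneg _
    rcases lt_trichotomy (‖f i‖) 1 with hlt | heq | hgt
    · have := pow_lt_one₀ h2 hlt (by omega : m ≠ 0)
      rw [h1] at this; exact absurd this (lt_irrefl 1)
    · exact heq
    · have := one_lt_pow₀ hgt (by omega : m ≠ 0)
      rw [h1] at this; exact absurd this (lt_irrefl 1)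
  have hre_le : ∀ i, (f i).re ≤ 1 := by
    intro i
    calc (f i).re ≤ ‖f i‖ := Complex.re_le_norm _
    _ = 1 := habs i
  have hre_sum : ∑ i, (f i).re = (n : ℝ) := by
    have h3 := congrArg Complex.re hfsum
    rw [Complex.re_sum] at h3
    simpa using h3
  have hall : ∀ i, f i = 1 := by
    have hzero : ∑ i : Fin n, (1 - (f i).re) = 0 := by
      rw [Finset.sum_sub_distrib, hre_sum]
      simp
    have heach := (Finset.sum_eq_zero_iff_of_nonneg
      (fun i _ => by linarith [hre_le i])).1 hzero
    intro i
    have h1 : (f i).re = 1 := by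
      have h4 := heach i (Finset.mem_univ i)
      linarith
    have h2 : Complex.normSq (f i) = 1 := by
      have h5 := habs i
      rw [← Complex.sq_norm, h5]; norm_num
    have h3 : (f i).im = 0 := by
      rw [Complex.normSq_apply, h1] at h2
      nlinarith
    exact Complex.ext (by simp [h1]) (by simp [h3])
  have hroots : M.charpoly.roots = Multiset.replicate n 1 := by
    have hone : ∀ x ∈ M.charpoly.roots, x = (1 : ℂ) := by
      intro x hx
      rw [← Multiset.mem_toList, ← hl] at hx
      obtain ⟨i, hi⟩ := List.mem_iff_get.1 hx
      have h6 : x = f (Fin.cast hlen i) := by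
        rw [hf]; simp [← hi]
      rw [h6]; exact hall _
    exact (Multiset.eq_replicate_card.2 hone).trans (by rw [hcard])
  have hcp : M.charpoly = (X - C 1) ^ n := by
    have h7 := hs.eq_prod_roots_of_monic (Matrix.charpoly_monic M)
    rw [hroots] at h7
    rw [h7, Multiset.map_replicate, Multiset.prod_replicate]
  have hnil : (M - 1) ^ n = 0 := by
    have h8 := Matrix.aeval_self_charpoly M
    rw [hcp] at h8
    simpa [map_pow, map_sub, aeval_X, aeval_C, Algebra.algebraMap_eq_smul_one] using h8
  have hz : M - 1 = 0 := by
    apply nilpotent_part_zero hm (N := M - 1) (K := n) _ hnil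
    rwa [add_sub_cancel]
  rwa [sub_eq_zero] at hz

end Burnside1905

open Burnside1905 in
/-- Burnside's theorem (1905): every finitely generated subgroup of `GL(n, ℂ)` of
bounded exponent is finite. -/
theorem stmt_18 (n : ℕ) (Γ : Subgroup (GL (Fin n) ℂ)) (hfg : Γ.FG)
    (m : ℕ) (hm : 1 ≤ m) (hexp : ∀ γ ∈ Γ, γ ^ m = 1) :
    Finite Γ := by
  classical
  -- the image of Γ in the matrix algebra
  set s : Set (Matrix (Fin n) (Fin n) ℂ) :=
    (fun γ : GL (Fin n) ℂ => (γ : Matrix (Fin n) (Fin n) ℂ)) '' (Γ : Set (GL (Fin n) ℂ)) with hs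
  obtain ⟨b, hbs, hspan, hli⟩ := exists_linearIndependent ℂ s
  have hbfin : b.Finite := hli.setFinite
  haveI : Finite b := hbfin
  have hSfin : (rootSums n m).Finite := rootSums_finite hm
  haveI : Finite (rootSums n m) := hSfin
  -- powers of elements of Γ are trivial, on the matrix level
  have hpow : ∀ γ : GL (Fin n) ℂ, γ ∈ Γ →
      ((γ : Matrix (Fin n) (Fin n) ℂ)) ^ m = 1 := by
    intro γ hγ
    have := hexp γ hγ
    have h2 : ((γ ^ m : GL (Fin n) ℂ) : Matrix (Fin n) (Fin n) ℂ) = 1 := by rw [this]; rfl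
    rwa [Units.val_pow_eq_pow_val] at h2
  -- the map recording traces against elements of b
  have hbmem : ∀ x : b, ∃ δ : GL (Fin n) ℂ, δ ∈ Γ ∧ (δ : Matrix (Fin n) (Fin n) ℂ) = x := by
    intro x
    obtain ⟨δ, hδ, hδx⟩ := hbs x.2
    exact ⟨δ, hδ, hδx⟩
  choose δf hδf1 hδf2 using hbmem
  set F : Γ → (b → rootSums n m) := fun γ x =>
    ⟨(((γ : GL (Fin n) ℂ) : Matrix (Fin n) (Fin n) ℂ) * (x : Matrix (Fin n) (Fin n) ℂ)).trace, by
      have hmemΓ : (γ : GL (Fin n) ℂ) * δf x ∈ Γ := Γ.mul_mem γ.2 (hδf1 x)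
      have h1 := hpow _ hmemΓ
      rw [Units.val_mul, hδf2 x] at h1
      exact trace_mem_rootSums h1⟩ with hF
  have hinj : Function.Injective F := by
    intro γ γ' hFγ
    -- traces against b agree
    have htr : ∀ x ∈ b, (((γ : GL (Fin n) ℂ) : Matrix (Fin n) (Fin n) ℂ) * x).trace =
        (((γ' : GL (Fin n) ℂ) : Matrix (Fin n) (Fin n) ℂ) * x).trace := by
      intro x hx
      have := congrFun hFγ ⟨x, hx⟩
      exact Subtype.ext_iff.1 this
    -- the linear functional `A ↦ trace ((γ - γ') * A)` vanishes on span b = span s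
    set L : Matrix (Fin n) (Fin n) ℂ →ₗ[ℂ] ℂ :=
      (Matrix.traceLinearMap (Fin n) ℂ ℂ).comp
        (LinearMap.mulLeft ℂ (((γ : GL (Fin n) ℂ) : Matrix (Fin n) (Fin n) ℂ) -
          ((γ' : GL (Fin n) ℂ) : Matrix (Fin n) (Fin n) ℂ))) with hL
    have hLb : ∀ x ∈ b, L x = 0 := by
      intro x hx
      have h1 : L x = (((γ : GL (Fin n) ℂ) : Matrix (Fin n) (Fin n) ℂ) * x).trace -
          (((γ' : GL (Fin n) ℂ) : Matrix (Fin n) (Fin n) ℂ) * x).trace := by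
        simp [hL, Matrix.sub_mul, Matrix.trace_sub]
      rw [h1, htr x hx, sub_self]
    have hLspan : ∀ a ∈ Submodule.span ℂ s, L a = 0 := by
      intro a ha
      rw [← hspan] at ha
      have hsub : Submodule.span ℂ b ≤ LinearMap.ker L := by
        rw [Submodule.span_le]
        intro x hx
        exact hLb x hx
      exact hsub ha
    -- apply to `(γ')⁻¹`
    have hinv : (((γ' : GL (Fin n) ℂ)⁻¹ : GL (Fin n) ℂ) : Matrix (Fin n) (Fin n) ℂ) ∈ s := by
      exact ⟨(γ' : GL (Fin n) ℂ)⁻¹, Γ.inv_mem γ'.2, rfl⟩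
    have hL0 := hLspan _ (Submodule.subset_span hinv)
    -- unfold: trace (γ * γ'⁻¹) = n
    have hBB : (((γ' : GL (Fin n) ℂ)) : Matrix (Fin n) (Fin n) ℂ) *
        ((((γ' : GL (Fin n) ℂ))⁻¹ : GL (Fin n) ℂ) : Matrix (Fin n) (Fin n) ℂ) = 1 := by
      rw [← Units.val_mul, mul_inv_cancel, Units.val_one]
    have hAB : (((γ : GL (Fin n) ℂ)) : Matrix (Fin n) (Fin n) ℂ) *
        ((((γ' : GL (Fin n) ℂ))⁻¹ : GL (Fin n) ℂ) : Matrix (Fin n) (Fin n) ℂ) =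
        ((((γ : GL (Fin n) ℂ)) * ((γ' : GL (Fin n) ℂ))⁻¹ : GL (Fin n) ℂ) :
          Matrix (Fin n) (Fin n) ℂ) := by
      rw [Units.val_mul]
    have h2 : L (((( γ' : GL (Fin n) ℂ))⁻¹ : GL (Fin n) ℂ) : Matrix (Fin n) (Fin n) ℂ) =
        ((((γ : GL (Fin n) ℂ)) * ((γ' : GL (Fin n) ℂ))⁻¹ : GL (Fin n) ℂ) :
          Matrix (Fin n) (Fin n) ℂ).trace - (n : ℂ) := by
      have h5 : L (((( γ' : GL (Fin n) ℂ))⁻¹ : GL (Fin n) ℂ) : Matrix (Fin n) (Fin n) ℂ) =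
          ((((γ : GL (Fin n) ℂ)) : Matrix (Fin n) (Fin n) ℂ) *
            ((((γ' : GL (Fin n) ℂ))⁻¹ : GL (Fin n) ℂ) : Matrix (Fin n) (Fin n) ℂ)).trace -
          ((((γ' : GL (Fin n) ℂ)) : Matrix (Fin n) (Fin n) ℂ) *
            ((((γ' : GL (Fin n) ℂ))⁻¹ : GL (Fin n) ℂ) : Matrix (Fin n) (Fin n) ℂ)).trace := by
        simp [hL, Matrix.sub_mul, Matrix.trace_sub]
      rw [h5, hAB, hBB, Matrix.trace_one]
      simp
    rw [hL0] at h2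
    have htrn : ((((γ : GL (Fin n) ℂ)) * ((γ' : GL (Fin n) ℂ))⁻¹ : GL (Fin n) ℂ) :
        Matrix (Fin n) (Fin n) ℂ).trace = (n : ℂ) := by
      have := sub_eq_zero.1 h2.symm
      exact this
    -- conclude
    have hgΓ : ((γ : GL (Fin n) ℂ)) * ((γ' : GL (Fin n) ℂ))⁻¹ ∈ Γ :=
      Γ.mul_mem γ.2 (Γ.inv_mem γ'.2)
    have hone := eq_one_of_trace_eq hm (hpow _ hgΓ) htrn
    have hgl : ((γ : GL (Fin n) ℂ)) * ((γ' : GL (Fin n) ℂ))⁻¹ = 1 := Units.ext hone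
    have : (γ : GL (Fin n) ℂ) = (γ' : GL (Fin n) ℂ) := mul_inv_eq_one.1 hgl
    exact Subtype.ext this
  exact Finite.of_injective F hinj
end
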